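/- For any integer r ≥ 2 and any positive integer m there exists a neural network Mult^r_m with the absolute value activation a(x) = |x|, of depth L = (2m + 5)⌈log₂ r⌉ + 1, input dimension p_0 = r + 1, output dimension p_{L+1} = 1 and maximal width ‖p‖_∞ ≤ 6r(m + 2) + 1, such that |Mult^r_m(1, x_1, …, x_r) − ∏_{i=1}^{r} x_i| ≤ r² · 4^{−m} for all (x_1, …, x_r) ∈ [0,1]^r, and such that the (r+1)-dimensional row vector J obtained as the product of the entrywise absolute values of its weight matrices satisfies ‖J‖_∞ ≤ 144 r⁴. -/

import Mathlib

open scoped BigOperators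
open Matrix

noncomputable section

/-- A bias-free neural network with width function `p`: for each `i`,
a real weight matrix of size `p (i+1) × p i`. -/
structure NN (p : ℕ → ℕ) where
  W : ∀ i : ℕ, Matrix (Fin (p (i + 1))) (Fin (p i)) ℝ

namespace NN

variable {p : ℕ → ℕ}

/-- Forward pass: output after multiplying by `W i` (activation `α` applied
between consecutive matrices, but not after the last one). -/
def pre (α : ℝ → ℝ) (f : NN p) : (i : ℕ) → (Fin (p 0) → ℝ) → (Fin (p (i + 1)) → ℝ)
  | 0, x => f.W 0 *ᵥ x
  | (i + 1), x => f.W (i + 1) *ᵥ fun j => α (f.pre α i x j)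

/-- Evaluation of the network of depth `L` (i.e. using matrices `W 0, …, W L`). -/
def eval (α : ℝ → ℝ) (f : NN p) (L : ℕ) (x : Fin (p 0) → ℝ) : Fin (p (L + 1)) → ℝ :=
  f.pre α L x

/-- The product `|W i| ⬝ |W (i-1)| ⬝ ⋯ ⬝ |W 0|` of the entrywise absolute values of the
weight matrices. -/
def absProd (f : NN p) : (i : ℕ) → Matrix (Fin (p (i + 1))) (Fin (p 0)) ℝ
  | 0 => Matrix.of fun j k => |f.W 0 j k|
  | (i + 1) => (Matrix.of fun j k => |f.W (i + 1) j k|) * f.absProd i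

/-- `‖f‖_×`: the ℓ¹ norm (sum of absolute values of all entries) of the matrix
`|W L| ⬝ ⋯ ⬝ |W 0|`. -/
def normTimes (f : NN p) (L : ℕ) : ℝ :=
  ∑ j, ∑ k, |f.absProd L j k|

end NN

/-- The absolute value activation function. -/
def absAct : ℝ → ℝ := fun x => |x|

/-!
On `[0, 1]` the square is approximated by Yarotsky's sawtooth sum: with `g` the tent map,
`x - x ^ 2 = ∑ s ≥ 1, g^[s] x / 4 ^ s`, and truncating after `m` terms costs at most
`4 ^ (-m) / 4`. Absolute-value neurons compute `g` exactly, so `m + 3` layers approximate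
`a * b = ((a + b) / 2) ^ 2 - (|a - b| / 2) ^ 2` within `4 ^ (-m) / 2`. Padding the input with ones
to `2 ^ q` factors, `q = ⌈log₂ r⌉`, the product is computed by a binary tree of `q` rounds of
`2m + 5` layers each (the spare layers copy, since `|·|` fixes the nonnegative products); the
errors add up to `(2 ^ q - 1) 4 ^ (-m) / 2 ≤ r² 4 ^ (-m)`.

Every layer is sparse with weights of size at most one. Tracking, neuron by neuron, a bound on
the rows of `|W_i| ⋯ |W_0|` shows that one round multiplies the bound by at most `6`, so the
entries of `J` are at most `6 ^ q ≤ (2 ^ q) ^ 4 ≤ 16 r ^ 4`.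
-/

section SparseRows

variable {σ τ : Type*} [DecidableEq τ]

def sparseVec (l : List (τ × ℝ)) (t : τ) : ℝ :=
  (l.map fun tw => if tw.1 = t then tw.2 else 0).sum

def ofSparseRows (rows : σ → List (τ × ℝ)) : Matrix σ τ ℝ :=
  Matrix.of fun s => sparseVec (rows s)

theorem sparseVec_cons (tw : τ × ℝ) (l : List (τ × ℝ)) (t : τ) :
    sparseVec (tw :: l) t = (if tw.1 = t then tw.2 else 0) + sparseVec l t := by
  simp [sparseVec]

theorem abs_sparseVec_le (l : List (τ × ℝ)) (t : τ) :
    |sparseVec l t| ≤ (l.map fun tw => |tw.2|).sum := by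
  induction l with
  | nil => simp [sparseVec]
  | cons tw l ih =>
    rw [sparseVec_cons, List.map_cons, List.sum_cons]
    refine (abs_add_le _ _).trans (add_le_add ?_ ih)
    split_ifs <;> simp

variable [Fintype τ]

theorem sparseVec_dotProduct (l : List (τ × ℝ)) (y : τ → ℝ) :
    sparseVec l ⬝ᵥ y = (l.map fun tw => tw.2 * y tw.1).sum := by
  induction l with
  | nil => simp [sparseVec, dotProduct]
  | cons tw l ih =>
    simp [dotProduct, sparseVec_cons, add_mul, Finset.sum_add_distrib, ite_mul, ← ih]

theorem ofSparseRows_mulVec (rows : σ → List (τ × ℝ)) (y : τ → ℝ) (s : σ) :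
    (ofSparseRows rows *ᵥ y) s = ((rows s).map fun tw => tw.2 * y tw.1).sum :=
  sparseVec_dotProduct _ _

theorem sum_abs_sparseVec_mul_le (l : List (τ × ℝ)) {c : τ → ℝ} (hc : 0 ≤ c) :
    ∑ t, |sparseVec l t| * c t ≤ (l.map fun tw => |tw.2| * c tw.1).sum := by
  induction l with
  | nil => simp [sparseVec]
  | cons tw l ih =>
    calc ∑ t, |sparseVec (tw :: l) t| * c t
        ≤ ∑ t, (|if tw.1 = t then tw.2 else 0| * c t + |sparseVec l t| * c t) := by
          gcongr with t
          rw [← add_mul, sparseVec_cons]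
          exact mul_le_mul_of_nonneg_right (abs_add_le _ _) (hc t)
      _ ≤ |tw.2| * c tw.1 + (l.map fun tw => |tw.2| * c tw.1).sum := by
          rw [Finset.sum_add_distrib]
          gcongr
          simp [apply_ite, ite_mul]
      _ = _ := by simp

theorem sum_abs_ofSparseRows_mul_le (rows : σ → List (τ × ℝ)) {c : τ → ℝ} (hc : 0 ≤ c)
    (s : σ) :
    ∑ t, |ofSparseRows rows s t| * c t ≤ ((rows s).map fun tw => |tw.2| * c tw.1).sum :=
  sum_abs_sparseVec_mul_le _ hc

end SparseRows

namespace NN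

variable {p : ℕ → ℕ} {σ τ : Type*} [Fintype τ]

theorem pre_zero_eq (f : NN p) (α : ℝ → ℝ) {d' : Fin (p 1) → σ} {d : Fin (p 0) → τ}
    (hd : d.Bijective) {M : Matrix σ τ ℝ} (hW : ∀ j k, f.W 0 j k = M (d' j) (d k))
    {x : Fin (p 0) → ℝ} {y : τ → ℝ} (hy : x = y ∘ d) :
    f.pre α 0 x = (M *ᵥ y) ∘ d' := by
  funext j
  simp only [pre, Function.comp, mulVec, dotProduct, hW, hy]
  exact hd.sum_comp fun t => M (d' j) t * y t

theorem pre_succ_eq (f : NN p) (α : ℝ → ℝ) {i : ℕ} {d' : Fin (p (i + 2)) → σ}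
    {d : Fin (p (i + 1)) → τ} (hd : d.Bijective) {M : Matrix σ τ ℝ}
    (hW : ∀ j k, f.W (i + 1) j k = M (d' j) (d k)) {x : Fin (p 0) → ℝ} {y : τ → ℝ}
    (hy : f.pre α i x = y ∘ d) :
    f.pre α (i + 1) x = (M *ᵥ (α ∘ y)) ∘ d' := by
  funext j
  simp only [pre, Function.comp, mulVec, dotProduct, hW, hy]
  exact hd.sum_comp fun t => M (d' j) t * α (y t)

theorem absProd_nonneg (f : NN p) (i : ℕ) (j : Fin (p (i + 1))) (k : Fin (p 0)) :
    0 ≤ f.absProd i j k := by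
  induction i with
  | zero => exact abs_nonneg _
  | succ i ih =>
    simp only [absProd, Matrix.mul_apply, Matrix.of_apply]
    exact Finset.sum_nonneg fun l _ => mul_nonneg (abs_nonneg _) (ih l)

omit [Fintype τ] in
theorem absProd_zero_le (f : NN p) {d' : Fin (p 1) → σ} {d : Fin (p 0) → τ}
    {M : Matrix σ τ ℝ} (hW : ∀ j k, f.W 0 j k = M (d' j) (d k)) {c : σ → ℝ}
    (hc : ∀ s t, |M s t| ≤ c s) (j : Fin (p 1)) (k : Fin (p 0)) :
    f.absProd 0 j k ≤ c (d' j) := by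
  simpa [absProd, hW] using hc (d' j) (d k)

theorem absProd_succ_le (f : NN p) {i : ℕ} {d' : Fin (p (i + 2)) → σ}
    {d : Fin (p (i + 1)) → τ} (hd : d.Bijective) {M : Matrix σ τ ℝ}
    (hW : ∀ j k, f.W (i + 1) j k = M (d' j) (d k)) {c : τ → ℝ}
    (hc : ∀ j k, f.absProd i j k ≤ c (d j)) {c' : σ → ℝ}
    (hc' : ∀ s, ∑ t, |M s t| * c t ≤ c' s) (j : Fin (p (i + 2))) (k : Fin (p 0)) :
    f.absProd (i + 1) j k ≤ c' (d' j) := by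
  calc f.absProd (i + 1) j k = ∑ l, |M (d' j) (d l)| * f.absProd i l k := by
        simp [absProd, Matrix.mul_apply, hW]
    _ ≤ ∑ l, |M (d' j) (d l)| * c (d l) := by gcongr with l; exact hc l k
    _ = ∑ t, |M (d' j) t| * c t := hd.sum_comp fun t => |M (d' j) t| * c t
    _ ≤ c' (d' j) := hc' _

end NN

namespace MultNet

open Set Finset

def tent (x : ℝ) : ℝ := 1 - |2 * x - 1|

theorem tent_mapsTo : MapsTo tent (Icc 0 1) (Icc 0 1) := fun x ⟨h0, h1⟩ =>
  ⟨by rw [tent, sub_nonneg, abs_le]; constructor <;> linarith,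
    by rw [tent]; linarith [abs_nonneg (2 * x - 1)]⟩

theorem sub_sq_eq_tent (x : ℝ) : x - x ^ 2 = (2 * tent x - tent x ^ 2) / 4 := by
  rw [tent]
  linear_combination (1 / 4 : ℝ) * sq_abs (2 * x - 1)

/-- Truncation of the series `x - x ^ 2 = ∑ s ≥ 1, tent^[s] x / 4 ^ s`, valid on `[0, 1]`
(iterate `sub_sq_eq_tent`). -/
def sqApprox (m : ℕ) (x : ℝ) : ℝ :=
  x - ∑ s ∈ range m, tent^[s + 1] x / 4 ^ (s + 1)

theorem sqApprox_succ (m : ℕ) (x : ℝ) :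
    sqApprox (m + 1) x = sqApprox m x - tent^[m + 1] x / 4 ^ (m + 1) := by
  simp only [sqApprox, sum_range_succ]
  ring

theorem sqApprox_sub_sq (m : ℕ) (x : ℝ) :
    sqApprox m x - x ^ 2 = (tent^[m] x - (tent^[m] x) ^ 2) / 4 ^ m := by
  induction m with
  | zero => simp [sqApprox]
  | succ m ih =>
    rw [sqApprox_succ, Function.iterate_succ_apply', sub_right_comm, ih,
      sub_sq_eq_tent (tent^[m] x)]
    ring

theorem sq_le_sqApprox (m : ℕ) {x : ℝ} (hx : x ∈ Icc (0 : ℝ) 1) : x ^ 2 ≤ sqApprox m x := by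
  obtain ⟨h0, h1⟩ := tent_mapsTo.iterate m hx
  rw [← sub_nonneg, sqApprox_sub_sq]
  exact div_nonneg (by nlinarith) (by positivity)

theorem sqApprox_le_self (m : ℕ) {x : ℝ} (hx : x ∈ Icc (0 : ℝ) 1) : sqApprox m x ≤ x := by
  rw [sqApprox, sub_le_self_iff]
  exact sum_nonneg fun s _ => div_nonneg (tent_mapsTo.iterate _ hx).1 (by positivity)

theorem sqApprox_mem_Icc (m : ℕ) {x : ℝ} (hx : x ∈ Icc (0 : ℝ) 1) :
    sqApprox m x ∈ Icc (0 : ℝ) 1 :=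
  ⟨(sq_nonneg x).trans (sq_le_sqApprox m hx), (sqApprox_le_self m hx).trans hx.2⟩

theorem abs_sqApprox_sub_sq_le (m : ℕ) {x : ℝ} (hx : x ∈ Icc (0 : ℝ) 1) :
    |sqApprox m x - x ^ 2| ≤ (4 ^ m)⁻¹ / 4 := by
  rw [abs_of_nonneg (sub_nonneg.2 (sq_le_sqApprox m hx)), sqApprox_sub_sq, div_eq_mul_inv]
  nlinarith [mul_nonneg (sq_nonneg (tent^[m] x - 1 / 2)) (inv_pos.2 (pow_pos four_pos m)).le]

/-- The argument `2 * tent^[e] x - 1` of the next tent, scaled by `2 ^ (-(e + 1))` so that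
successive ones are related by weights of size at most one (`tentArg_succ`). -/
def tentArg (e : ℕ) (x : ℝ) : ℝ := (2 * tent^[e] x - 1) / 2 ^ (e + 1)

theorem tentArg_zero (x : ℝ) : tentArg 0 x = x - 1 / 2 := by
  simp only [tentArg, Function.iterate_zero, id_eq, zero_add, pow_one]
  ring

theorem abs_tentArg (e : ℕ) (x : ℝ) :
    |tentArg e x| = (1 - tent^[e + 1] x) / 2 ^ (e + 1) := by
  rw [tentArg, abs_div, abs_of_pos (by positivity : (0 : ℝ) < 2 ^ (e + 1)),
    Function.iterate_succ_apply', tent, sub_sub_cancel]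

theorem tentArg_succ (e : ℕ) (x : ℝ) :
    tentArg (e + 1) x = (2 ^ (e + 2))⁻¹ - |tentArg e x| := by
  rw [abs_tentArg, tentArg, Function.iterate_succ_apply', pow_succ _ (e + 1)]
  field_simp
  ring

theorem sqApprox_succ_eq_tentArg (e : ℕ) (x : ℝ) :
    sqApprox (e + 1) x = sqApprox e x - (4 ^ (e + 1))⁻¹ + (2 ^ (e + 1))⁻¹ * |tentArg e x| := by
  rw [sqApprox_succ, abs_tentArg, show (4 : ℝ) ^ (e + 1) = 2 ^ (e + 1) * 2 ^ (e + 1) by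
    rw [← mul_pow]; norm_num]
  field_simp
  ring

def mulApprox (m : ℕ) (a b : ℝ) : ℝ :=
  |sqApprox m ((a + b) / 2) - sqApprox m (|a - b| / 2)|

theorem half_add_mem_Icc {a b : ℝ} (ha : a ∈ Icc (0 : ℝ) 1) (hb : b ∈ Icc (0 : ℝ) 1) :
    (a + b) / 2 ∈ Icc (0 : ℝ) 1 :=
  ⟨by linarith [ha.1, hb.1], by linarith [ha.2, hb.2]⟩

theorem half_abs_sub_mem_Icc {a b : ℝ} (ha : a ∈ Icc (0 : ℝ) 1) (hb : b ∈ Icc (0 : ℝ) 1) :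
    |a - b| / 2 ∈ Icc (0 : ℝ) 1 :=
  ⟨by positivity, by linarith [abs_sub_le_of_nonneg_of_le ha.1 ha.2 hb.1 hb.2]⟩

theorem mulApprox_mem_Icc (m : ℕ) {a b : ℝ} (ha : a ∈ Icc (0 : ℝ) 1)
    (hb : b ∈ Icc (0 : ℝ) 1) : mulApprox m a b ∈ Icc (0 : ℝ) 1 := by
  obtain ⟨hu0, hu1⟩ := sqApprox_mem_Icc m (half_add_mem_Icc ha hb)
  obtain ⟨hv0, hv1⟩ := sqApprox_mem_Icc m (half_abs_sub_mem_Icc ha hb)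
  exact ⟨abs_nonneg _, abs_sub_le_of_nonneg_of_le hu0 hu1 hv0 hv1⟩

theorem abs_mulApprox_sub_mul_le (m : ℕ) {a b : ℝ} (ha : a ∈ Icc (0 : ℝ) 1)
    (hb : b ∈ Icc (0 : ℝ) 1) : |mulApprox m a b - a * b| ≤ (4 ^ m)⁻¹ / 2 := by
  have hu := abs_sqApprox_sub_sq_le m (half_add_mem_Icc ha hb)
  have hv := abs_sqApprox_sub_sq_le m (half_abs_sub_mem_Icc ha hb)
  have hab : a * b = ((a + b) / 2) ^ 2 - (|a - b| / 2) ^ 2 := by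
    rw [div_pow, div_pow, sq_abs]
    ring
  have hz := abs_abs_sub_abs_le_abs_sub
    (sqApprox m ((a + b) / 2) - sqApprox m (|a - b| / 2)) (a * b)
  rw [abs_of_nonneg (mul_nonneg ha.1 hb.1)] at hz
  calc |mulApprox m a b - a * b|
      ≤ |sqApprox m ((a + b) / 2) - sqApprox m (|a - b| / 2) - a * b| := hz
    _ = |(sqApprox m ((a + b) / 2) - ((a + b) / 2) ^ 2)
          - (sqApprox m (|a - b| / 2) - (|a - b| / 2) ^ 2)| := by rw [hab]; ring_nf
    _ ≤ (4 ^ m)⁻¹ / 4 + (4 ^ m)⁻¹ / 4 := (abs_sub _ _).trans (add_le_add hu hv)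
    _ = (4 ^ m)⁻¹ / 2 := by ring

/-- The network has room for `P` products per round, so the entries from `P` on are set to `0`. -/
def mulPairs (m P : ℕ) (a : ℕ → ℝ) (j : ℕ) : ℝ :=
  if j < P then mulApprox m (a (2 * j)) (a (2 * j + 1)) else 0

theorem mulPairs_mem_Icc (m P : ℕ) {a : ℕ → ℝ} (ha : ∀ j, a j ∈ Icc (0 : ℝ) 1) (j : ℕ) :
    mulPairs m P a j ∈ Icc (0 : ℝ) 1 := by
  unfold mulPairs
  split_ifs
  exacts [mulApprox_mem_Icc m (ha _) (ha _), ⟨le_rfl, zero_le_one⟩]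

theorem iterate_mulPairs_mem_Icc (m P t : ℕ) {a : ℕ → ℝ} (ha : ∀ j, a j ∈ Icc (0 : ℝ) 1)
    (j : ℕ) : (mulPairs m P)^[t] a j ∈ Icc (0 : ℝ) 1 := by
  induction t generalizing j with
  | zero => exact ha j
  | succ t ih =>
    rw [Function.iterate_succ_apply']
    exact mulPairs_mem_Icc m P ih j

theorem abs_mul_sub_mul_le {a b a' b' : ℝ} (ha : a ∈ Icc (0 : ℝ) 1)
    (hb' : b' ∈ Icc (0 : ℝ) 1) : |a * b - a' * b'| ≤ |a - a'| + |b - b'| := by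
  have h1 : |a - a'| * |b'| ≤ |a - a'| := mul_le_of_le_one_right (abs_nonneg _)
    (by rw [abs_of_nonneg hb'.1]; exact hb'.2)
  have h2 : |a| * |b - b'| ≤ |b - b'| := mul_le_of_le_one_left (abs_nonneg _)
    (by rw [abs_of_nonneg ha.1]; exact ha.2)
  calc |a * b - a' * b'| = |(a - a') * b' + a * (b - b')| := by ring_nf
    _ ≤ |a - a'| * |b'| + |a| * |b - b'| := by rw [← abs_mul, ← abs_mul]; exact abs_add_le _ _
    _ ≤ |a - a'| + |b - b'| := add_le_add h1 h2

theorem prod_range_two_pow_succ (a : ℕ → ℝ) (t k : ℕ) :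
    ∏ i ∈ range (2 ^ (t + 1)), a (2 ^ (t + 1) * k + i)
      = (∏ i ∈ range (2 ^ t), a (2 ^ t * (2 * k) + i))
        * ∏ i ∈ range (2 ^ t), a (2 ^ t * (2 * k + 1) + i) := by
  rw [pow_succ, mul_two, prod_range_add]
  congr 1 <;> refine prod_congr rfl fun i _ => congrArg a (by ring)

theorem abs_iterate_mulPairs_sub_prod_le (m P : ℕ) {a : ℕ → ℝ}
    (ha : ∀ j, a j ∈ Icc (0 : ℝ) 1) (t k : ℕ) (hk : 2 ^ t * (k + 1) ≤ 2 * P) :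
    |(mulPairs m P)^[t] a k - ∏ i ∈ range (2 ^ t), a (2 ^ t * k + i)|
      ≤ (2 ^ t - 1) * ((4 ^ m)⁻¹ / 2) := by
  induction t generalizing k with
  | zero => simp
  | succ t ih =>
    set A := (mulPairs m P)^[t] a
    have hA := iterate_mulPairs_mem_Icc m P t ha
    have hkP : k < P := by
      have : 2 * (k + 1) ≤ 2 ^ (t + 1) * (k + 1) :=
        Nat.mul_le_mul_right _ (Nat.le_self_pow (Nat.succ_ne_zero t) 2)
      omega
    have h0 := ih (2 * k) (by rw [pow_succ] at hk; nlinarith)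
    have h1 := ih (2 * k + 1) (by rw [pow_succ] at hk; nlinarith)
    have hB : ∏ i ∈ range (2 ^ t), a (2 ^ t * (2 * k + 1) + i) ∈ Icc (0 : ℝ) 1 :=
      ⟨prod_nonneg fun i _ => (ha _).1, prod_le_one (fun i _ => (ha _).1) fun i _ => (ha _).2⟩
    rw [Function.iterate_succ_apply', mulPairs, if_pos hkP, prod_range_two_pow_succ]
    calc _ ≤ |mulApprox m (A (2 * k)) (A (2 * k + 1)) - A (2 * k) * A (2 * k + 1)|
          + |A (2 * k) * A (2 * k + 1) - (∏ i ∈ range (2 ^ t), a (2 ^ t * (2 * k) + i))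
              * ∏ i ∈ range (2 ^ t), a (2 ^ t * (2 * k + 1) + i)| := abs_sub_le _ _ _
      _ ≤ (4 ^ m)⁻¹ / 2 + ((2 ^ t - 1) * ((4 ^ m)⁻¹ / 2) + (2 ^ t - 1) * ((4 ^ m)⁻¹ / 2)) :=
          add_le_add (abs_mulApprox_sub_mul_le m (hA _) (hA _))
            ((abs_mul_sub_mul_le (hA _) hB).trans (add_le_add h0 h1))
      _ = (2 ^ (t + 1) - 1) * ((4 ^ m)⁻¹ / 2) := by ring

def pad {r : ℕ} (x : Fin r → ℝ) (j : ℕ) : ℝ := if h : j < r then x ⟨j, h⟩ else 1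

theorem pad_mem_Icc {r : ℕ} {x : Fin r → ℝ} (hx : ∀ i, x i ∈ Icc (0 : ℝ) 1) (j : ℕ) :
    pad x j ∈ Icc (0 : ℝ) 1 := by
  unfold pad
  split_ifs
  exacts [hx _, ⟨zero_le_one, le_rfl⟩]

theorem prod_range_pad {r n : ℕ} (x : Fin r → ℝ) (hn : r ≤ n) :
    ∏ j ∈ range n, pad x j = ∏ i, x i := by
  rw [← Nat.add_sub_cancel' hn, prod_range_add, ← Fin.prod_univ_eq_prod_range]
  simp [pad]

theorem two_pow_clog_eq {r : ℕ} (hr : 2 ≤ r) :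
    2 ^ Nat.clog 2 r = 2 * 2 ^ (Nat.clog 2 r - 1) := by
  rw [← pow_succ', Nat.sub_add_cancel (Nat.clog_pos one_lt_two hr)]

theorem two_pow_clog_lt {r : ℕ} (hr : 2 ≤ r) : 2 ^ Nat.clog 2 r < 2 * r := by
  have := Nat.pow_pred_clog_lt_self one_lt_two hr
  rw [Nat.pred_eq_sub_one] at this
  rw [two_pow_clog_eq hr]
  omega

theorem abs_iterate_mulPairs_pad_sub_prod_le (m : ℕ) {r : ℕ} (hr : 2 ≤ r) {x : Fin r → ℝ}
    (hx : ∀ i, x i ∈ Icc (0 : ℝ) 1) :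
    |(mulPairs m (2 ^ (Nat.clog 2 r - 1)))^[Nat.clog 2 r] (pad x) 0 - ∏ i, x i|
      ≤ (r : ℝ) ^ 2 * ((4 : ℝ) ^ m)⁻¹ := by
  have herr := abs_iterate_mulPairs_sub_prod_le m (2 ^ (Nat.clog 2 r - 1)) (pad_mem_Icc hx)
    (Nat.clog 2 r) 0 (by rw [two_pow_clog_eq hr, zero_add, mul_one])
  simp only [mul_zero, zero_add, prod_range_pad x (Nat.le_pow_clog one_lt_two r)] at herr
  refine herr.trans ?_
  have hQ : (2 : ℝ) ^ Nat.clog 2 r ≤ 2 * r := by exact_mod_cast (two_pow_clog_lt hr).le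
  have hr' : (2 : ℝ) ≤ r := by exact_mod_cast hr
  have hr2 : (r : ℝ) ≤ r ^ 2 := by nlinarith
  nlinarith [inv_pos.2 (pow_pos (by norm_num : (0 : ℝ) < 4) m)]

theorem six_pow_clog_le {r : ℕ} (hr : 2 ≤ r) : (6 : ℝ) ^ Nat.clog 2 r ≤ 144 * r ^ 4 := by
  have h : 6 ^ Nat.clog 2 r ≤ 16 * r ^ 4 :=
    calc 6 ^ Nat.clog 2 r ≤ (2 ^ Nat.clog 2 r) ^ 4 := by
          rw [← pow_mul, mul_comm, pow_mul]
          exact Nat.pow_le_pow_left (by norm_num) _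
      _ ≤ (2 * r) ^ 4 := Nat.pow_le_pow_left (two_pow_clog_lt hr).le 4
      _ = 16 * r ^ 4 := by ring
  have : (6 : ℝ) ^ Nat.clog 2 r ≤ 16 * r ^ 4 := by exact_mod_cast h
  nlinarith [pow_nonneg (Nat.cast_nonneg r : (0 : ℝ) ≤ r) 4]

end MultNet

/-- The neurons of a hidden layer: a constant `1` (the bias), the `2 * P` factors of the current
round, and for the `k`-th pair `(a, b)` of factors and `x = (a + b) / 2` (`σ = true`) or
`x = |a - b| / 2` (`σ = false`), the running approximation `sq` of `x ^ 2` and the running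
sawtooth argument `hat`. -/
inductive Slot (P : ℕ)
  | one
  | val (j : Fin (2 * P))
  | sq (k : Fin P) (σ : Bool)
  | hat (k : Fin P) (σ : Bool)
  deriving DecidableEq

namespace Slot

variable {P : ℕ}

def equivOption : Slot P ≃ Option (Fin (2 * P) ⊕ Fin P × Bool × Bool) where
  toFun
    | one => none
    | val j => some (.inl j)
    | sq k σ => some (.inr (k, σ, true))
    | hat k σ => some (.inr (k, σ, false))
  invFun
    | none => one
    | some (.inl j) => val j
    | some (.inr (k, σ, true)) => sq k σ
    | some (.inr (k, σ, false)) => hat k σ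
  left_inv s := by cases s <;> rfl
  right_inv o := by rcases o with _ | j | ⟨k, σ, _ | _⟩ <;> rfl

instance : Fintype (Slot P) := Fintype.ofEquiv _ equivOption.symm

theorem card_eq : Fintype.card (Slot P) = 6 * P + 1 := by
  rw [Fintype.card_congr equivOption]
  simp only [Fintype.card_option, Fintype.card_sum, Fintype.card_fin, Fintype.card_prod,
    Fintype.card_bool]
  ring

def equivFin : Slot P ≃ Fin (6 * P + 1) := Fintype.equivFinOfCardEq card_eq

def ofFin {n : ℕ} (j : Fin n) : Slot P :=
  if h : (j : ℕ) < 6 * P + 1 then equivFin.symm ⟨j, h⟩ else one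

theorem ofFin_bijective {n : ℕ} (h : n = 6 * P + 1) :
    Function.Bijective (ofFin : Fin n → Slot P) := by
  subst h
  convert equivFin.symm.bijective
  funext j
  simp [ofFin, j.isLt]

def pairFst (k : Fin P) : Fin (2 * P) := ⟨2 * k, by omega⟩

def pairSnd (k : Fin P) : Fin (2 * P) := ⟨2 * k + 1, by omega⟩

end Slot

namespace MultNet

open Set

section Round

variable {P : ℕ}

def pairInput (a : ℕ → ℝ) (k : ℕ) : Bool → ℝ
  | true => (a (2 * k) + a (2 * k + 1)) / 2
  | false => |a (2 * k) - a (2 * k + 1)| / 2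

theorem pairInput_mem_Icc {a : ℕ → ℝ} (ha : ∀ j, a j ∈ Icc (0 : ℝ) 1) (k : ℕ) (σ : Bool) :
    pairInput a k σ ∈ Icc (0 : ℝ) 1 := by
  cases σ
  exacts [half_abs_sub_mem_Icc (ha _) (ha _), half_add_mem_Icc (ha _) (ha _)]

def sqDiff (m P : ℕ) (a : ℕ → ℝ) (j : ℕ) : ℝ :=
  if j < P then sqApprox m (pairInput a j true) - sqApprox m (pairInput a j false) else 0

theorem abs_sqDiff (m P : ℕ) (a : ℕ → ℝ) (j : ℕ) : |sqDiff m P a j| = mulPairs m P a j := by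
  unfold sqDiff mulPairs mulApprox
  split_ifs <;> simp [pairInput]

def valueState (P : ℕ) (a : ℕ → ℝ) : Slot P → ℝ
  | .one => 1
  | .val j => a j
  | _ => 0

def splitState (P : ℕ) (a : ℕ → ℝ) : Slot P → ℝ
  | .one => 1
  | .sq k true => (a (2 * k) + a (2 * k + 1)) / 2
  | .sq k false => (a (2 * k) - a (2 * k + 1)) / 2
  | _ => 0

def chainState (P : ℕ) (a : ℕ → ℝ) (e : ℕ) : Slot P → ℝ
  | .one => 1
  | .sq k σ => sqApprox e (pairInput a k σ)
  | .hat k σ => tentArg e (pairInput a k σ)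
  | _ => 0

def splitRows : Slot P → List (Slot P × ℝ)
  | .one => [(.one, 1)]
  | .sq k true => [(.val (Slot.pairFst k), 1 / 2), (.val (Slot.pairSnd k), 1 / 2)]
  | .sq k false => [(.val (Slot.pairFst k), 1 / 2), (.val (Slot.pairSnd k), -1 / 2)]
  | _ => []

def startRows : Slot P → List (Slot P × ℝ)
  | .one => [(.one, 1)]
  | .sq k σ => [(.sq k σ, 1)]
  | .hat k σ => [(.sq k σ, 1), (.one, -1 / 2)]
  | _ => []

def sawtoothRows (e : ℕ) : Slot P → List (Slot P × ℝ)
  | .one => [(.one, 1)]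
  | .sq k σ => [(.sq k σ, 1), (.one, -(4 ^ (e + 1))⁻¹), (.hat k σ, (2 ^ (e + 1))⁻¹)]
  | .hat k σ => [(.one, (2 ^ (e + 2))⁻¹), (.hat k σ, -1)]
  | _ => []

def diffRows : Slot P → List (Slot P × ℝ)
  | .one => [(.one, 1)]
  | .val j => if h : (j : ℕ) < P then [(.sq ⟨j, h⟩ true, 1), (.sq ⟨j, h⟩ false, -1)] else []
  | _ => []

def copyRows : Slot P → List (Slot P × ℝ)
  | .one => [(.one, 1)]
  | .val j => [(.val j, 1)]
  | _ => []

theorem splitRows_mulVec {a : ℕ → ℝ} (ha : ∀ j, 0 ≤ a j) :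
    ofSparseRows splitRows *ᵥ (absAct ∘ valueState P a) = splitState P a := by
  funext s
  rcases s with _ | j | ⟨k, _ | _⟩ | ⟨k, σ⟩ <;>
    simp only [ofSparseRows_mulVec, splitRows, valueState, splitState, Function.comp_apply,
      absAct, Slot.pairFst, Slot.pairSnd, abs_one, abs_of_nonneg (ha _), List.map_cons,
      List.map_nil, List.sum_cons, List.sum_nil] <;> ring

theorem startRows_mulVec {a : ℕ → ℝ} (ha : ∀ j, 0 ≤ a j) :
    ofSparseRows startRows *ᵥ (absAct ∘ splitState P a) = chainState P a 0 := by
  funext s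
  rcases s with _ | j | ⟨k, _ | _⟩ | ⟨k, _ | _⟩ <;>
    simp only [ofSparseRows_mulVec, startRows, splitState, chainState, Function.comp_apply,
      absAct, pairInput, sqApprox, Finset.range_zero, Finset.sum_empty, tentArg_zero, abs_one,
      abs_div, Nat.abs_ofNat, abs_of_nonneg (add_nonneg (ha _) (ha _)), List.map_cons,
      List.map_nil, List.sum_cons, List.sum_nil] <;> ring

theorem sawtoothRows_mulVec {a : ℕ → ℝ} (ha : ∀ j, a j ∈ Icc (0 : ℝ) 1) (e : ℕ) :
    ofSparseRows (sawtoothRows e) *ᵥ (absAct ∘ chainState P a e) = chainState P a (e + 1) := by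
  funext s
  rcases s with _ | j | ⟨k, σ⟩ | ⟨k, σ⟩ <;>
    simp only [ofSparseRows_mulVec, sawtoothRows, chainState, Function.comp_apply, absAct,
      tentArg_succ, sqApprox_succ_eq_tentArg, abs_one,
      abs_of_nonneg (sqApprox_mem_Icc _ (pairInput_mem_Icc ha _ _)).1, List.map_cons,
      List.map_nil, List.sum_cons, List.sum_nil] <;> ring

theorem diffRows_mulVec {a : ℕ → ℝ} (ha : ∀ j, a j ∈ Icc (0 : ℝ) 1) (m : ℕ) :
    ofSparseRows diffRows *ᵥ (absAct ∘ chainState P a m) = valueState P (sqDiff m P a) := by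
  funext s
  rcases s with _ | j | ⟨k, σ⟩ | ⟨k, σ⟩ <;>
    simp only [diffRows, valueState, sqDiff, ofSparseRows_mulVec]
  · simp [chainState, absAct]
  · split_ifs <;> simp [chainState, absAct, sub_eq_add_neg,
      abs_of_nonneg (sqApprox_mem_Icc _ (pairInput_mem_Icc ha _ _)).1]
  all_goals simp

theorem copyRows_mulVec (b : ℕ → ℝ) :
    ofSparseRows copyRows *ᵥ (absAct ∘ valueState P b) = valueState P fun j => |b j| := by
  funext s
  rcases s with _ | j | ⟨k, σ⟩ | ⟨k, σ⟩ <;>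
    simp [ofSparseRows_mulVec, copyRows, valueState, absAct]

/-- The `2 * m + 5` layers of a round: split each pair `(a, b)` into `(a ± b) / 2`, start the
sawtooth, `m` sawtooth steps, subtract the two squares; the remaining `m + 2` layers copy. -/
def stageRows (m n : ℕ) : Slot P → List (Slot P × ℝ) :=
  if n = 0 then splitRows else if n = 1 then startRows
  else if n ≤ m + 1 then sawtoothRows (n - 2) else if n = m + 2 then diffRows else copyRows

def stageState (m P : ℕ) (a : ℕ → ℝ) (n : ℕ) : Slot P → ℝ :=
  if n = 0 then valueState P a else if n = 1 then splitState P a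
  else if n ≤ m + 2 then chainState P a (n - 2) else if n = m + 3 then valueState P (sqDiff m P a)
  else valueState P (mulPairs m P a)

theorem stageRows_of_gt {m n : ℕ} (h : m + 2 < n) : stageRows (P := P) m n = copyRows := by
  rw [stageRows, if_neg (by omega), if_neg (by omega), if_neg (by omega), if_neg (by omega)]

theorem stageState_of_gt {m n : ℕ} (a : ℕ → ℝ) (h : m + 3 < n) :
    stageState m P a n = valueState P (mulPairs m P a) := by
  rw [stageState, if_neg (by omega), if_neg (by omega), if_neg (by omega), if_neg (by omega)]

theorem stageRows_mulVec (m : ℕ) {a : ℕ → ℝ} (ha : ∀ j, a j ∈ Icc (0 : ℝ) 1) (n : ℕ) :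
    ofSparseRows (stageRows m n) *ᵥ (absAct ∘ stageState m P a n) = stageState m P a (n + 1) := by
  obtain rfl | rfl | ⟨e, rfl⟩ : n = 0 ∨ n = 1 ∨ ∃ e, n = e + 2 := by
    rcases n with _ | _ | e <;> simp
  · simpa [stageRows, stageState] using splitRows_mulVec fun j => (ha j).1
  · simpa [stageRows, stageState] using startRows_mulVec fun j => (ha j).1
  rcases lt_trichotomy e m with he | rfl | he
  · simpa [stageRows, stageState, he.le, show e + 2 ≤ m + 1 by omega]
      using sawtoothRows_mulVec ha e
  · simpa [stageRows, stageState] using diffRows_mulVec ha e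
  rw [stageRows_of_gt (by omega), stageState_of_gt a (by omega : m + 3 < e + 2 + 1)]
  rcases (Nat.succ_le_of_lt he).eq_or_lt with rfl | he'
  · simp [stageState, copyRows_mulVec, abs_sqDiff]
  · rw [stageState_of_gt a (by omega), copyRows_mulVec]
    simp [abs_of_nonneg (mulPairs_mem_Icc m P ha _).1]

variable {M : ℝ}

/-- Bounds on the rows of `|W_i| ⋯ |W_0|` during the sawtooth, given the bound `M` at the start of
the round; they telescope, so that the round ends with the bound `6 * M`. -/
def chainBound (P : ℕ) (M : ℝ) (e : ℕ) : Slot P → ℝ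
  | .sq _ _ => (3 - 2 / 2 ^ e) * M
  | .hat _ _ => (2 - 1 / 2 ^ (e + 1)) * M
  | _ => M

theorem chainBound_nonneg (hM : 0 ≤ M) (e : ℕ) (s : Slot P) : 0 ≤ chainBound P M e s := by
  have h1 : 2 / 2 ^ e ≤ (2 : ℝ) := div_le_self zero_le_two (one_le_pow₀ one_le_two)
  have h2 : 1 / 2 ^ (e + 1) ≤ (1 : ℝ) := div_le_self zero_le_one (one_le_pow₀ one_le_two)
  rcases s with _ | _ | _ | _ <;> simp only [chainBound] <;> nlinarith

theorem splitRows_bound (hM : 0 ≤ M) (s : Slot P) :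
    ((splitRows s).map fun tw => |tw.2| * M).sum ≤ M := by
  rcases s with _ | j | ⟨k, _ | _⟩ | ⟨k, σ⟩ <;> norm_num [splitRows, abs_of_nonneg] <;> linarith

theorem startRows_bound (hM : 0 ≤ M) (s : Slot P) :
    ((startRows s).map fun tw => |tw.2| * M).sum ≤ chainBound P M 0 s := by
  rcases s with _ | j | ⟨k, σ⟩ | ⟨k, σ⟩ <;> norm_num [startRows, chainBound] <;> linarith

theorem sawtoothRows_bound (hM : 0 ≤ M) (e : ℕ) (s : Slot P) :
    ((sawtoothRows e s).map fun tw => |tw.2| * chainBound P M e tw.1).sum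
      ≤ chainBound P M (e + 1) s := by
  have h2 : (0 : ℝ) < 2 ^ e := by positivity
  have h4 : (4 : ℝ) ^ e = 2 ^ e * 2 ^ e := by rw [← mul_pow]; norm_num
  rcases s with _ | j | ⟨k, σ⟩ | ⟨k, σ⟩ <;>
    simp only [sawtoothRows, chainBound, List.map_cons, List.map_nil, List.sum_cons, List.sum_nil,
      abs_one, abs_neg, abs_inv, abs_mul, Nat.abs_ofNat, pow_succ, h4, abs_of_pos h2]
  · linarith
  · linarith
  all_goals apply le_of_eq; field_simp; ring

theorem diffRows_bound (hM : 0 ≤ M) (m : ℕ) (s : Slot P) :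
    ((diffRows s).map fun tw => |tw.2| * chainBound P M m tw.1).sum ≤ 6 * M := by
  have h2 : (0 : ℝ) < 2 / 2 ^ m := by positivity
  rcases s with _ | j | ⟨k, σ⟩ | ⟨k, σ⟩ <;> simp only [diffRows]
  · norm_num [chainBound]
    linarith
  · split_ifs <;> norm_num [chainBound] <;> nlinarith
  all_goals norm_num; linarith

theorem copyRows_bound (hM : 0 ≤ M) (s : Slot P) :
    ((copyRows s).map fun tw => |tw.2| * M).sum ≤ M := by
  rcases s with _ | j | ⟨k, σ⟩ | ⟨k, σ⟩ <;> norm_num [copyRows, hM]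

def stageBound (m P : ℕ) (M : ℝ) (n : ℕ) : Slot P → ℝ :=
  if n ≤ 1 then fun _ => M else if n ≤ m + 2 then chainBound P M (n - 2) else fun _ => 6 * M

theorem stageBound_of_gt {m n : ℕ} (M : ℝ) (h : m + 2 < n) :
    stageBound m P M n = fun _ => 6 * M := by
  rw [stageBound, if_neg (by omega), if_neg (by omega)]

theorem stageBound_nonneg (m : ℕ) (hM : 0 ≤ M) (n : ℕ) (s : Slot P) :
    0 ≤ stageBound m P M n s := by
  unfold stageBound
  split_ifs
  exacts [hM, chainBound_nonneg hM _ s, by linarith]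

theorem sum_abs_stageRows_mul_le (m : ℕ) (hM : 0 ≤ M) (n : ℕ) (s : Slot P) :
    ∑ t, |ofSparseRows (stageRows m n) s t| * stageBound m P M n t
      ≤ stageBound m P M (n + 1) s := by
  refine (sum_abs_ofSparseRows_mul_le _ (fun t => stageBound_nonneg m hM n t) s).trans ?_
  obtain rfl | rfl | ⟨e, rfl⟩ : n = 0 ∨ n = 1 ∨ ∃ e, n = e + 2 := by
    rcases n with _ | _ | e <;> simp
  · simpa [stageRows, stageBound] using splitRows_bound hM s
  · simpa [stageRows, stageBound] using startRows_bound hM s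
  rcases lt_trichotomy e m with he | rfl | he
  · simpa [stageRows, stageBound, he.le, show e + 2 ≤ m + 1 by omega]
      using sawtoothRows_bound hM e s
  · simpa [stageRows, stageBound] using diffRows_bound hM e s
  rw [stageRows_of_gt (by omega), stageBound_of_gt M (by omega), stageBound_of_gt M (by omega)]
  exact copyRows_bound (by linarith) s

end Round

section Network

variable {r m q : ℕ}

def width (r m q : ℕ) (i : ℕ) : ℕ :=
  if i = 0 then r + 1 else if i ≤ (2 * m + 5) * q + 1 then 6 * 2 ^ (q - 1) + 1 else 1

def embedRows (r P : ℕ) : Slot P → List (Fin (r + 1) × ℝ)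
  | .one => [(0, 1)]
  | .val j => if h : (j : ℕ) < r then [(⟨j + 1, by omega⟩, 1)] else [(0, 1)]
  | _ => []

def readoutRows (q : ℕ) : Fin 1 → List (Slot (2 ^ (q - 1)) × ℝ) :=
  fun _ => [(.val ⟨0, by positivity⟩, 1)]

/-- Layer `0` embeds `(1, x)`, round `t < q` occupies the layers `(2m+5)t + 1, …, (2m+5)(t+1)`,
and layer `(2m+5)q + 1` reads off the single remaining factor. -/
def net (r m q : ℕ) : NN (width r m q) where
  W i := Matrix.of fun j k =>
    if h : i = 0 then
      ofSparseRows (embedRows r (2 ^ (q - 1))) (Slot.ofFin j) (Fin.cast (by subst h; rfl) k)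
    else if i < (2 * m + 5) * q + 1 then
      ofSparseRows (stageRows (P := 2 ^ (q - 1)) m ((i - 1) % (2 * m + 5))) (Slot.ofFin j)
        (Slot.ofFin k)
    else ofSparseRows (readoutRows q) 0 (Slot.ofFin k)

theorem width_zero : width r m q 0 = r + 1 := rfl

theorem width_eq {i : ℕ} (hi₀ : 0 < i) (hi : i ≤ (2 * m + 5) * q + 1) :
    width r m q i = 6 * 2 ^ (q - 1) + 1 := by
  simp [width, hi₀.ne', hi]

theorem width_output : width r m q ((2 * m + 5) * q + 1 + 1) = 1 := by
  simp [width]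

theorem width_le (hr : 2 ≤ r) (i : ℕ) : width r m (Nat.clog 2 r) i ≤ 6 * r * (m + 2) + 1 := by
  have hQ := two_pow_clog_eq hr
  have hQr := two_pow_clog_lt hr
  unfold width
  split_ifs <;> nlinarith

theorem net_W_zero (j : Fin (width r m q 1)) (k : Fin (width r m q 0)) :
    (net r m q).W 0 j k
      = ofSparseRows (embedRows r (2 ^ (q - 1))) (Slot.ofFin j) (Fin.cast width_zero k) :=
  rfl

theorem net_W_stage (t n : ℕ) (ht : t < q) (hn : n < 2 * m + 5)
    (j : Fin (width r m q ((2 * m + 5) * t + n + 1 + 1)))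
    (k : Fin (width r m q ((2 * m + 5) * t + n + 1))) :
    (net r m q).W ((2 * m + 5) * t + n + 1) j k
      = ofSparseRows (stageRows (P := 2 ^ (q - 1)) m n) (Slot.ofFin j) (Slot.ofFin k) := by
  have : (2 * m + 5) * t + n < (2 * m + 5) * q := by nlinarith
  simp [net, this, Nat.mod_eq_of_lt hn]

theorem net_W_output (j : Fin (width r m q ((2 * m + 5) * q + 1 + 1)))
    (k : Fin (width r m q ((2 * m + 5) * q + 1))) :
    (net r m q).W ((2 * m + 5) * q + 1) j k = ofSparseRows (readoutRows q) 0 (Slot.ofFin k) := by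
  simp [net]

theorem embedRows_mulVec {P : ℕ} (x : Fin r → ℝ) :
    ofSparseRows (embedRows r P) *ᵥ Fin.cons 1 x = valueState P (pad x) := by
  funext s
  rcases s with _ | j | ⟨k, σ⟩ | ⟨k, σ⟩ <;>
    simp only [ofSparseRows_mulVec, embedRows, valueState]
  · simp
  · unfold pad
    split_ifs with h
    · simpa using Fin.cons_succ (α := fun _ => ℝ) 1 x ⟨j, h⟩
    · simp
  all_goals simp

theorem abs_embedRows_le {P : ℕ} (s : Slot P) (k : Fin (r + 1)) :
    |ofSparseRows (embedRows r P) s k| ≤ 1 := by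
  refine (abs_sparseVec_le _ k).trans ?_
  rcases s with _ | j | _ | _ <;> simp only [embedRows]
  · simp
  · split_ifs <;> simp
  all_goals simp

theorem net_pre_zero (x : Fin r → ℝ) :
    (net r m q).pre absAct 0 (Fin.cons 1 x ∘ Fin.cast width_zero) =
      valueState (2 ^ (q - 1)) (pad x) ∘ Slot.ofFin := by
  rw [NN.pre_zero_eq _ _ (d := Fin.cast width_zero) (finCongr width_zero).bijective net_W_zero
    rfl, embedRows_mulVec]

theorem net_pre_stage {x : Fin (width r m q 0) → ℝ} {a : ℕ → ℝ}
    (ha : ∀ j, a j ∈ Icc (0 : ℝ) 1) {t : ℕ} (ht : t < q)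
    (h : (net r m q).pre absAct ((2 * m + 5) * t) x = valueState (2 ^ (q - 1)) a ∘ Slot.ofFin)
    {n : ℕ} (hn : n ≤ 2 * m + 5) :
    (net r m q).pre absAct ((2 * m + 5) * t + n) x
      = stageState m (2 ^ (q - 1)) a n ∘ Slot.ofFin := by
  induction n with
  | zero => simpa [stageState] using h
  | succ n ih =>
    have hw : width r m q ((2 * m + 5) * t + n + 1) = 6 * 2 ^ (q - 1) + 1 :=
      width_eq (by omega) (by nlinarith)
    rw [← add_assoc, NN.pre_succ_eq _ _ (Slot.ofFin_bijective hw)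
      (net_W_stage t n ht (by omega)) (ih (by omega)), stageRows_mulVec m ha]

theorem net_pre_stages (x : Fin r → ℝ) (hx : ∀ i, x i ∈ Icc (0 : ℝ) 1) {t : ℕ}
    (ht : t ≤ q) :
    (net r m q).pre absAct ((2 * m + 5) * t) (Fin.cons 1 x ∘ Fin.cast width_zero) =
      valueState (2 ^ (q - 1)) ((mulPairs m (2 ^ (q - 1)))^[t] (pad x)) ∘ Slot.ofFin := by
  induction t with
  | zero => simpa using net_pre_zero x
  | succ t ih =>
    rw [Nat.mul_succ, net_pre_stage (iterate_mulPairs_mem_Icc m _ t (pad_mem_Icc hx)) ht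
      (ih (by omega)) le_rfl, stageState_of_gt _ (by omega), Function.iterate_succ_apply']

theorem net_eval (x : Fin r → ℝ) (hx : ∀ i, x i ∈ Icc (0 : ℝ) 1)
    (j : Fin (width r m q ((2 * m + 5) * q + 1 + 1))) :
    (net r m q).eval absAct ((2 * m + 5) * q + 1) (Fin.cons 1 x ∘ Fin.cast width_zero) j =
      (mulPairs m (2 ^ (q - 1)))^[q] (pad x) 0 := by
  rw [NN.eval, NN.pre_succ_eq _ _ (d' := fun _ => 0)
    (Slot.ofFin_bijective (width_eq (by omega) le_rfl)) net_W_output (net_pre_stages x hx le_rfl)]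
  simp [ofSparseRows_mulVec, readoutRows, valueState, absAct,
    abs_of_nonneg (iterate_mulPairs_mem_Icc m _ q (pad_mem_Icc hx) 0).1]

theorem net_absProd_stage {M : ℝ} (hM : 0 ≤ M) {t : ℕ} (ht : t < q)
    (h : ∀ j k, (net r m q).absProd ((2 * m + 5) * t) j k ≤ M) {n : ℕ} (hn : n ≤ 2 * m + 5) :
    ∀ j k, (net r m q).absProd ((2 * m + 5) * t + n) j k ≤
      stageBound m (2 ^ (q - 1)) M n (Slot.ofFin j) := by
  induction n with
  | zero => simpa [stageBound] using h
  | succ n ih =>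
    have hw : width r m q ((2 * m + 5) * t + n + 1) = 6 * 2 ^ (q - 1) + 1 :=
      width_eq (by omega) (by nlinarith)
    exact NN.absProd_succ_le _ (Slot.ofFin_bijective hw) (net_W_stage t n ht (by omega))
      (ih (by omega)) (sum_abs_stageRows_mul_le m hM n)

theorem net_absProd_stages {t : ℕ} (ht : t ≤ q) :
    ∀ j k, (net r m q).absProd ((2 * m + 5) * t) j k ≤ 6 ^ t := by
  induction t with
  | zero =>
    simpa using NN.absProd_zero_le _ net_W_zero (c := fun _ => 1) fun s t => abs_embedRows_le s t
  | succ t ih =>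
    intro j k
    have := net_absProd_stage (pow_nonneg (by norm_num : (0 : ℝ) ≤ 6) t) ht (ih (by omega))
      le_rfl j k
    rwa [stageBound_of_gt _ (by omega), ← pow_succ'] at this

theorem net_absProd_output (j : Fin (width r m q ((2 * m + 5) * q + 1 + 1)))
    (k : Fin (width r m q 0)) : (net r m q).absProd ((2 * m + 5) * q + 1) j k ≤ 6 ^ q :=
  NN.absProd_succ_le _ (d' := fun _ => 0) (c := fun _ => 6 ^ q) (c' := fun _ => 6 ^ q)
    (Slot.ofFin_bijective (width_eq (by omega) le_rfl)) net_W_output (net_absProd_stages le_rfl)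
    (fun s => (sum_abs_ofSparseRows_mul_le _ (fun _ => by positivity) s).trans
      (by simp [readoutRows]))
    j k

end Network

end MultNet

open MultNet

theorem exists_multr_network_general (r m : ℕ) (hr : 2 ≤ r) :
    ∃ (p : ℕ → ℕ) (h0 : p 0 = r + 1) (_ : p ((2 * m + 5) * Nat.clog 2 r + 1 + 1) = 1)
      (f : NN p),
      (∀ i ≤ (2 * m + 5) * Nat.clog 2 r + 1 + 1, p i ≤ 6 * r * (m + 2) + 1) ∧
      (∀ x : Fin r → ℝ, (∀ i, x i ∈ Set.Icc (0 : ℝ) 1) →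
        |(∑ j, f.eval absAct ((2 * m + 5) * Nat.clog 2 r + 1) (Fin.cons 1 x ∘ Fin.cast h0) j)
            - ∏ i, x i|
          ≤ (r : ℝ) ^ 2 * ((4 : ℝ) ^ m)⁻¹) ∧
      (∀ (j : Fin (p ((2 * m + 5) * Nat.clog 2 r + 1 + 1))) (k : Fin (p 0)),
        |f.absProd ((2 * m + 5) * Nat.clog 2 r + 1) j k| ≤ 144 * (r : ℝ) ^ 4) := by
  refine ⟨width r m _, width_zero, width_output, net r m _, fun i _ => width_le hr i,
    fun x hx => ?_, fun j k => ?_⟩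
  · simp only [net_eval x hx, Finset.sum_const, Finset.card_univ, Fintype.card_fin, width_output,
      one_smul]
    exact abs_iterate_mulPairs_pad_sub_prod_le m hr hx
  · rw [abs_of_nonneg (NN.absProd_nonneg _ _ _ _)]
    exact (net_absProd_output j k).trans (six_pow_clog_le hr)

/-- Lemma 5 (Multʳ): for every `r ≥ 2` and `m ≥ 1` there is a network `Mult^r_m` with the
absolute value activation, of depth `L = (2m+5)⌈log₂ r⌉ + 1`, input dimension `r+1`,
output dimension `1` and maximal width at most `6r(m+2)+1`, computing `∏ᵢ xᵢ` on `[0,1]^r`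
up to error `r²·4^{-m}` from the input `(1, x₁, …, x_r)`, and such that the row vector `J`
obtained as the product of the entrywise absolute values of its weight matrices satisfies
`‖J‖_∞ ≤ 144 r⁴`. -/
theorem exists_multr_network (r m : ℕ) (hr : 2 ≤ r) (hm : 0 < m) :
    ∃ (p : ℕ → ℕ) (h0 : p 0 = r + 1) (_ : p ((2 * m + 5) * Nat.clog 2 r + 1 + 1) = 1)
      (f : NN p),
      (∀ i ≤ (2 * m + 5) * Nat.clog 2 r + 1 + 1, p i ≤ 6 * r * (m + 2) + 1) ∧
      (∀ x : Fin r → ℝ, (∀ i, x i ∈ Set.Icc (0 : ℝ) 1) →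
        |(∑ j, f.eval absAct ((2 * m + 5) * Nat.clog 2 r + 1) (Fin.cons 1 x ∘ Fin.cast h0) j)
            - ∏ i, x i|
          ≤ (r : ℝ) ^ 2 * ((4 : ℝ) ^ m)⁻¹) ∧
      (∀ (j : Fin (p ((2 * m + 5) * Nat.clog 2 r + 1 + 1))) (k : Fin (p 0)),
        |f.absProd ((2 * m + 5) * Nat.clog 2 r + 1) j k| ≤ 144 * (r : ℝ) ^ 4) :=
  exists_multr_network_general r m hr
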